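/- Let π = dom(λ) be dominant and w ≤_L π. Then the π-padded Schubert polynomial satisfies the pipe dream formula 𝔖_w^π(x;y) = Σ_{P ∈ PD(w)} x^{P(cross)} · y^{P(bump) ∩ P(π)}, where x^S = ∏_{(i,j)∈S} x_i and y^S = ∏_{(i,j)∈S} y_i. -/

import Mathlib

open Equiv MvPolynomial

/-- A permutation of ℕ has finite support. -/
def FinSupp (w : Equiv.Perm ℕ) : Prop := {i | w i ≠ i}.Finite

/-- Inversion set Inv(w) = {(i,j) : i < j, w i > w j}. -/
def invSet (w : Equiv.Perm ℕ) : Set (ℕ × ℕ) := {p | p.1 < p.2 ∧ w p.2 < w p.1}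

/-- Co-inversion set coInv(w) = {(i,j) : i < j, w i < w j}. -/
def coinvSet (w : Equiv.Perm ℕ) : Set (ℕ × ℕ) := {p | p.1 < p.2 ∧ w p.1 < w p.2}

/-- Coxeter length ℓ(w) = |Inv(w)|. -/
noncomputable def len (w : Equiv.Perm ℕ) : ℕ := (invSet w).ncard

/-- Cover relation of left weak order: u = s_k * w with ℓ(u) = ℓ(w) + 1. -/
def WeakCover (w u : Equiv.Perm ℕ) : Prop :=
  ∃ k, u = Equiv.swap k (k + 1) * w ∧ len u = len w + 1

/-- Left weak order: reflexive-transitive closure of weak covers. -/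
def leL (w u : Equiv.Perm ℕ) : Prop := Relation.ReflTransGen WeakCover w u

/-- π avoids the pattern 132 (π is dominant). -/
def Avoids132 (π : Equiv.Perm ℕ) : Prop :=
  ¬ ∃ a b c : ℕ, a < b ∧ b < c ∧ π a < π c ∧ π c < π b

/-- Rothe diagram D(π) (0-indexed conventions). -/
def Rothe (π : Equiv.Perm ℕ) : Set (ℕ × ℕ) := {p | p.1 < π⁻¹ p.2 ∧ p.2 < π p.1}

/-- Young diagram of a partition (0-indexed): row i has l i cells. -/
def yd (l : ℕ → ℕ) : Set (ℕ × ℕ) := {p | p.2 < l p.1}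

/-- Conjugate partition (0-indexed): column j has |{i : l i > j}| cells. -/
noncomputable def conjPart (l : ℕ → ℕ) (j : ℕ) : ℕ := {i | j < l i}.ncard

/-- A pipe dream: a finite set of crossing tiles together with the (uniquely
determined) labels of the pipes on the four edges of each tile.  At a cross
tile the pipes pass straight through; at a bump tile the pipe from the north
exits west and the pipe from the east exits south.  Pipe j enters the quadrant
at the north edge of column j. -/
structure PipeDream where
  cross : Finset (ℕ × ℕ)
  north : ℕ × ℕ → ℕ
  east : ℕ × ℕ → ℕ
  south : ℕ × ℕ → ℕ
  west : ℕ × ℕ → ℕ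
  north_top : ∀ j, north (0, j) = j
  north_succ : ∀ i j, north (i + 1, j) = south (i, j)
  east_eq : ∀ i j, east (i, j) = west (i, j + 1)
  south_cross : ∀ p ∈ cross, south p = north p
  west_cross : ∀ p ∈ cross, west p = east p
  south_bump : ∀ p, p ∉ cross → south p = east p
  west_bump : ∀ p, p ∉ cross → west p = north p

namespace PipeDream

/-- Pipes a and b cross at position p. -/
def CrossAt (P : PipeDream) (a b : ℕ) (p : ℕ × ℕ) : Prop :=
  p ∈ P.cross ∧ ({P.north p, P.east p} : Set ℕ) = {a, b}

/-- A pipe dream is reduced if no two pipes cross more than once. -/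
def Reduced (P : PipeDream) : Prop :=
  ∀ a b p q, P.CrossAt a b p → P.CrossAt a b q → p = q

/-- P is a pipe dream for the permutation w: pipe a exits on the west edge at
row w⁻¹(a), i.e. the one-line notation read along the west edge is w. -/
def IsFor (P : PipeDream) (w : Equiv.Perm ℕ) : Prop := ∀ i, P.west (i, 0) = w i

/-- Pipe k passes through the tile p. -/
def OnPipe (P : PipeDream) (k : ℕ) (p : ℕ × ℕ) : Prop := P.north p = k ∨ P.east p = k

/-- p lies weakly northwest of pipe k. -/
def NWOfPipe (P : PipeDream) (k : ℕ) (p : ℕ × ℕ) : Prop :=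
  ∃ q, P.OnPipe k q ∧ p.1 ≤ q.1 ∧ p.2 ≤ q.2

end PipeDream

/-- The set of reduced pipe dreams for w. -/
def PD (w : Equiv.Perm ℕ) : Set PipeDream := {P | P.Reduced ∧ P.IsFor w}

/-- The set of π-dominated positions of a pipe dream P ∈ PD(w), where π is the
dominant permutation with Rothe diagram the Young diagram of l:
row(p) < λ'(π(w⁻¹(s_p))) (0-indexed), s_p being the pipe exiting p south. -/
noncomputable def dominated (π : Equiv.Perm ℕ) (l : ℕ → ℕ) (w : Equiv.Perm ℕ)
    (P : PipeDream) : Set (ℕ × ℕ) :=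
  {p | p.1 < conjPart l (π (w⁻¹ (P.south p)))}

/-- The Schubert polynomial as the pipe dream generating function. -/
noncomputable def Schub (w : Equiv.Perm ℕ) : MvPolynomial ℕ ℤ :=
  ∑ᶠ P ∈ PD w, ∏ p ∈ P.cross, X p.1

/-- The polynomial ring ℤ[x;y]: x-variables are `Sum.inl i`, y-variables `Sum.inr i`. -/
abbrev PolyXY := MvPolynomial (ℕ ⊕ ℕ) ℤ

/-- The field of rational functions in the x- and y-variables. -/
noncomputable abbrev RatXY := FractionRing PolyXY

noncomputable def Xv (i : ℕ) : RatXY := algebraMap PolyXY RatXY (X (Sum.inl i))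
noncomputable def Yv (i : ℕ) : RatXY := algebraMap PolyXY RatXY (X (Sum.inr i))

/-- The π-padded Schubert polynomial 𝔖_w^π(x;y) = y^λ · 𝔖_w(x₁/y₁, x₂/y₂, …),
viewed in the field of rational functions. -/
noncomputable def padded (l : ℕ → ℕ) (w : Equiv.Perm ℕ) : RatXY :=
  (∏ᶠ i, Yv i ^ l i) * (aeval (fun i => Xv i / Yv i) (Schub w))

/-- Δ = Σ_i x_i ∂/∂y_i. -/
noncomputable def deltaOp (f : PolyXY) : PolyXY :=
  ∑ᶠ i : ℕ, X (Sum.inl i) * pderiv (Sum.inr i) f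

/-- ∇ = Σ_i y_i ∂/∂x_i. -/
noncomputable def nablaOp (f : PolyXY) : PolyXY :=
  ∑ᶠ i : ℕ, X (Sum.inr i) * pderiv (Sum.inl i) f

/-!
Expanding `y^λ · 𝔖_w(x/y)` over `PD(w)`, a pipe dream `P` contributes
`y^λ ∏_{p ∈ P(cross)} x_p / y_p`, which is `x^{P(cross)} y^{P(bump) ∩ P(π)}` as soon as row `i` of
`P(π)` has exactly `λ_i` cells and `P(cross) ⊆ P(π)`.

Row count: the pipes leaving row `i` southward are, once each, the pipes exiting on the west edge
below row `i`, and by antitonicity of `λ` the condition `i < λ'(π(w⁻¹ s))` reads `π(w⁻¹ s) < λ_i`.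
As `λ_a ≤ π a` (the Rothe diagram of `π` is the Young diagram of `λ`), the `λ_i` indices `a` with
`π a < λ_i` all lie below row `i`.

Crossings: the two pipes crossing at a tile of a reduced pipe dream form an inversion of `w`, hence
of `π` since `w ≤_L π`; for the dominant `π` this inversion is a cell of the Young diagram, which
gives the bound on the row. That the pair is an inversion is a wiring-diagram argument: processing
the tiles row by row, from east to west, the labels along the boundary of the processed region
form a word that changes by an adjacent transposition at each cross tile, so the relative order
of two pipes in it changes only where they cross, and they cross only once.
-/

lemma lt_ncard_iff_of_isLowerSet {s : Set ℕ} (hs : IsLowerSet s) (hfin : s.Finite) (i : ℕ) :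
    i < s.ncard ↔ i ∈ s := by
  obtain h | ⟨a, rfl⟩ := hs.eq_univ_or_Iio
  · exact absurd (h ▸ hfin) Set.infinite_univ
  · simp

lemma lt_conjPart_iff {l : ℕ → ℕ} (hl : Antitone l) (hsupp : (Function.support l).Finite)
    (i k : ℕ) : i < conjPart l k ↔ k < l i :=
  lt_ncard_iff_of_isLowerSet (fun _ _ hba ha => lt_of_lt_of_le ha (hl hba))
    (hsupp.subset fun _ hm => Nat.ne_zero_of_lt hm) i

section LeftWeakOrder

lemma swap_apply_lt_swap_apply_iff (k x y : ℕ) :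
    swap k (k + 1) x < swap k (k + 1) y ↔
      (x < y ∧ ¬(x = k ∧ y = k + 1)) ∨ (x = k + 1 ∧ y = k) := by
  simp only [swap_apply_def]
  split_ifs <;> omega

lemma mem_invSet_swap_mul {b : Perm ℕ} {k : ℕ} {p : ℕ × ℕ} (hp : p ∈ invSet b)
    (hne : p ≠ (b⁻¹ (k + 1), b⁻¹ k)) : p ∈ invSet (swap k (k + 1) * b) := by
  refine ⟨hp.1, ?_⟩
  rw [Perm.mul_apply, Perm.mul_apply, swap_apply_lt_swap_apply_iff]
  refine Or.inl ⟨hp.2, fun ⟨h2, h1⟩ => hne ?_⟩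
  exact Prod.ext (by rw [← h1]; simp) (by rw [← h2]; simp)

lemma invSet_subset_of_weakCover {b c : Perm ℕ} (h : WeakCover b c) : invSet b ⊆ invSet c := by
  obtain ⟨k, rfl, hlen⟩ := h
  set c := swap k (k + 1) * b
  have hb : b = swap k (k + 1) * c := by simp [c, ← mul_assoc]
  have hc_inv : ∀ m, c⁻¹ m = b⁻¹ (swap k (k + 1) m) := fun m => by simp [c]
  have hxy : b⁻¹ k ≠ b⁻¹ (k + 1) := fun h => by simpa using b⁻¹.injective h
  rcases lt_or_gt_of_ne hxy with hlt | hgt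
  · exact fun p hp => mem_invSet_swap_mul hp fun h => by
      have := hp.1
      rw [h] at this
      omega
  · exfalso
    -- a descent at the values `k, k + 1` would make `c` shorter than `b`
    have he : (b⁻¹ (k + 1), b⁻¹ k) ∈ invSet b := ⟨hgt, by simp⟩
    have hcb : invSet c = invSet b \ {(b⁻¹ (k + 1), b⁻¹ k)} := by
      refine subset_antisymm (fun p hp => ⟨?_, fun hpe => ?_⟩) fun p hp =>
        mem_invSet_swap_mul hp.1 hp.2
      · rw [hb]
        refine mem_invSet_swap_mul hp fun h => ?_
        have := hp.1
        rw [h, hc_inv, hc_inv, swap_apply_left, swap_apply_right] at this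
        omega
      · have := hp.2
        rw [Set.mem_singleton_iff.mp hpe] at this
        simp [c] at this
    by_cases hfin : (invSet b).Finite
    · have := Set.ncard_sdiff_singleton_add_one he hfin
      rw [← hcb] at this
      unfold len at hlen
      omega
    · have hcinf : (invSet c).Infinite := hcb ▸ Set.Infinite.sdiff hfin (Set.finite_singleton _)
      unfold len at hlen
      rw [Set.Infinite.ncard hfin, Set.Infinite.ncard hcinf] at hlen
      omega

lemma invSet_subset_of_leL {w π : Perm ℕ} (h : leL w π) : invSet w ⊆ invSet π := by
  induction h with
  | refl => exact subset_rfl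
  | tail _ hbc ih => exact ih.trans (invSet_subset_of_weakCover hbc)

end LeftWeakOrder

section Dominant

variable {π : Perm ℕ} {l : ℕ → ℕ}

lemma le_apply_of_rothe_eq_yd (hD : Rothe π = yd l) (a : ℕ) : l a ≤ π a := by
  rcases Nat.eq_zero_or_pos (l a) with h | h
  · omega
  · have hmem : (a, l a - 1) ∈ Rothe π := hD ▸ show l a - 1 < l a by omega
    have : l a - 1 < π a := hmem.2
    omega

lemma apply_lt_apply_iff_of_rothe_eq_yd (hD : Rothe π = yd l) {x y : ℕ} (hxy : x < y) :
    π y < π x ↔ π y < l x := by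
  have : (x, π y) ∈ Rothe π ↔ (x, π y) ∈ yd l := by rw [hD]
  simpa [Rothe, yd, hxy] using this

end Dominant

section BigOperators

lemma finprod_mem_comp_fst {α β M : Type*} [CommMonoid M] {s : Set (α × β)} (hs : s.Finite)
    (f : α → M) : ∏ᶠ q ∈ s, f q.1 = ∏ᶠ a, f a ^ {b | (a, b) ∈ s}.ncard := by
  classical
  have hrow : ∀ a, (hs.toFinset.filter (·.1 = a)).card = {b | (a, b) ∈ s}.ncard := fun a => by
    rw [← Set.ncard_coe_finset,
      ← Set.ncard_image_of_injective {b | (a, b) ∈ s} (Prod.mk_right_injective a)]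
    congr 1
    ext ⟨x, y⟩
    simp only [Finset.coe_filter, Set.Finite.mem_toFinset, Set.mem_ofPred_eq, Set.mem_image,
      Prod.mk.injEq]
    constructor
    · rintro ⟨hxy, rfl⟩
      exact ⟨y, hxy, rfl, rfl⟩
    · rintro ⟨y, hy, rfl, rfl⟩
      exact ⟨hy, rfl⟩
  rw [finprod_mem_eq_finite_toFinset_prod _ hs, Finset.prod_comp,
    finprod_eq_prod_of_mulSupport_subset (s := hs.toFinset.image Prod.fst)]
  · simp_rw [hrow]
  · intro a ha
    by_contra hnot
    refine ha ?_
    show f a ^ _ = 1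
    rw [← hrow, Finset.card_eq_zero.mpr, pow_zero]
    exact Finset.filter_eq_empty_iff.mpr fun q hq hqa =>
      hnot (Finset.mem_image.mpr ⟨q, hq, hqa⟩)

lemma map_finsum_mem_of_map_ne_zero {α M N G : Type*} [AddCommMonoid M] [AddCommMonoid N]
    [FunLike G M N] [AddMonoidHomClass G M N] (g : G) {f : α → M} {s : Set α}
    (hg : ∀ a ∈ s, f a ≠ 0 → g (f a) ≠ 0) : g (∑ᶠ a ∈ s, f a) = ∑ᶠ a ∈ s, g (f a) := by
  by_cases hfin : (s ∩ Function.support f).Finite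
  · exact (g : M →+ N).map_finsum_mem' hfin
  · have hsupp : s ∩ Function.support (fun a => g (f a)) = s ∩ Function.support f := by
      ext a
      simp only [Set.mem_inter_iff, Function.mem_support]
      exact ⟨fun ⟨ha, hga⟩ => ⟨ha, fun h => hga (by rw [h, map_zero])⟩,
        fun ⟨ha, hfa⟩ => ⟨ha, hg a ha hfa⟩⟩
    rw [finsum_mem_eq_zero_of_infinite hfin, map_zero,
      finsum_mem_eq_zero_of_infinite (hsupp ▸ hfin)]

lemma finprod_pow_mul_prod_div {K : Type*} [Field K] {x y : ℕ → K} (hy : ∀ i, y i ≠ 0)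
    {l : ℕ → ℕ} {C : Finset (ℕ × ℕ)} {D : Set (ℕ × ℕ)} (hCD : ↑C ⊆ D) (hDfin : D.Finite)
    (hrow : ∀ i, {j | (i, j) ∈ D}.ncard = l i) :
    (∏ᶠ i, y i ^ l i) * ∏ p ∈ C, x p.1 / y p.1 =
      (∏ p ∈ C, x p.1) * ∏ᶠ q ∈ {q | q ∉ C} ∩ D, y q.1 := by
  have hsplit : ∏ᶠ i, y i ^ l i = (∏ p ∈ C, y p.1) * ∏ᶠ q ∈ {q | q ∉ C} ∩ D, y q.1 := by
    rw [show {q | q ∉ C} ∩ D = D \ ↑C by ext; simp [and_comm], ← finprod_mem_coe_finset,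
      finprod_mem_mul_sdiff hCD hDfin, finprod_mem_comp_fst hDfin]
    simp_rw [hrow]
  have hC : ∏ p ∈ C, y p.1 ≠ 0 := Finset.prod_ne_zero_iff.mpr fun p _ => hy p.1
  rw [hsplit, Finset.prod_div_distrib]
  field_simp

end BigOperators

lemma le_inv_apply_of_eqOn {σ : ℕ → ℕ} (hσ : Function.Injective σ) {w : Perm ℕ} {n m : ℕ}
    (h : ∀ a < n, σ a = w a) (hm : n ≤ m) : n ≤ w⁻¹ (σ m) := by
  by_contra! hlt
  have : σ (w⁻¹ (σ m)) = σ m := (h _ hlt).trans (by simp)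
  have := hσ this
  omega

namespace PipeDream

variable (P : PipeDream)

/-- The labels of the pipes crossing the lattice path that separates the cells processed at
stage `(i, j)` (rows above `i`, and row `i` from column `j` on) from the others, read from the
top: the exits on the west edge of rows `< i`, the north edges of row `i` left of column `j`,
the west edge of `(i, j)`, then the south edges of row `i` from column `j` on. -/
def word (i j m : ℕ) : ℕ :=
  if m < i then P.west (m, 0)
  else if m < i + j then P.north (i, m - i)
  else if m = i + j then P.west (i, j)
  else P.south (i, m - i - 1)

def rowWord (i m : ℕ) : ℕ :=
  if m < i then P.west (m, 0) else P.north (i, m - i)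

def processed (i j : ℕ) : Set (ℕ × ℕ) := {q | q.1 < i ∨ (q.1 = i ∧ j ≤ q.2)}

variable {P}

lemma exists_notMem_cross : ∃ N, ∀ i c, N ≤ c → (i, c) ∉ P.cross :=
  ⟨P.cross.sup Prod.snd + 1, fun i c hc hmem => by
    have := Finset.le_sup (f := Prod.snd) hmem
    simp only at this
    omega⟩

lemma word_eq_rowWord {i j : ℕ} (h : ∀ c, j ≤ c → (i, c) ∉ P.cross) :
    P.word i j = P.rowWord i := by
  funext m
  simp only [word, rowWord]
  split_ifs with h1 h2 h3
  · rfl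
  · rfl
  · rw [P.west_bump _ (h j le_rfl), h3, Nat.add_sub_cancel_left]
  · rw [P.south_bump _ (h _ (by omega)), P.east_eq, P.west_bump _ (h _ (by omega))]
    congr 2
    omega

lemma word_of_notMem_cross {i j : ℕ} (h : (i, j) ∉ P.cross) : P.word i j = P.word i (j + 1) := by
  funext m
  simp only [word]
  split_ifs <;> first
    | rfl
    | omega
    | (subst_vars; simp [P.west_bump _ h, P.south_bump _ h, P.east_eq])

lemma word_of_mem_cross {i j : ℕ} (h : (i, j) ∈ P.cross) :
    P.word i j = P.word i (j + 1) ∘ swap (i + j) (i + j + 1) := by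
  funext m
  simp only [word, Function.comp_apply, swap_apply_def]
  split_ifs <;> first
    | rfl
    | omega
    | (subst_vars; simp [add_assoc, P.west_cross _ h, P.south_cross _ h, P.east_eq])

lemma word_zero (i : ℕ) : P.word i 0 = P.rowWord (i + 1) := by
  funext m
  simp only [word, rowWord]
  split_ifs <;> first
    | rfl
    | omega
    | (subst_vars; simp)
    | rw [P.north_succ, Nat.sub_sub]

lemma rowWord_zero : P.rowWord 0 = id := by
  funext m
  simp [rowWord, P.north_top]

lemma word_bijective_of_rowWord {i : ℕ} (h : Function.Bijective (P.rowWord i)) (j : ℕ) :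
    Function.Bijective (P.word i j) := by
  obtain ⟨N, hN⟩ := P.exists_notMem_cross
  refine Nat.decreasingInduction (motive := fun k _ => Function.Bijective (P.word i k))
    (fun k _ ih => ?_) ?_ (le_max_left j N)
  · by_cases hk : (i, k) ∈ P.cross
    · rw [word_of_mem_cross hk]
      exact ih.comp (swap _ _).bijective
    · rwa [word_of_notMem_cross hk]
  · rwa [word_eq_rowWord fun c hc => hN i c (le_of_max_le_right hc)]

lemma rowWord_bijective (i : ℕ) : Function.Bijective (P.rowWord i) := by
  induction i with
  | zero => rw [rowWord_zero]; exact Function.bijective_id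
  | succ i ih => rw [← word_zero]; exact word_bijective_of_rowWord ih 0

lemma word_bijective (i j : ℕ) : Function.Bijective (P.word i j) :=
  word_bijective_of_rowWord (rowWord_bijective i) j

lemma word_apply_of_isFor {w : Perm ℕ} (hfor : P.IsFor w) {i j m : ℕ}
    (hm : m < i ∨ (m = i ∧ j = 0)) : P.word i j m = w m := by
  rcases hm with hm | ⟨rfl, rfl⟩ <;> simp [word, hfor m, *]

lemma north_eq_word (i c : ℕ) : P.north (i, c) = P.word i (c + 1) (i + c) := by
  simp [word]

lemma east_eq_word (i c : ℕ) : P.east (i, c) = P.word i (c + 1) (i + c + 1) := by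
  simp only [word]
  split_ifs <;> first | omega | rw [P.east_eq]

lemma west_eq_word (i j : ℕ) : P.west (i, j) = P.word i j (i + j) := by
  simp [word]

lemma south_eq_word {i j c : ℕ} (hc : j ≤ c) : P.south (i, c) = P.word i j (i + c + 1) := by
  simp only [word]
  split_ifs <;> first | omega | (congr 2; omega)

variable (P) in
noncomputable def slot (i j u : ℕ) : ℕ := Function.invFun (P.word i j) u

lemma word_slot (i j u : ℕ) : P.word i j (P.slot i j u) = u :=
  Function.invFun_eq ((P.word_bijective i j).2 u)

lemma slot_eq_of_word_eq {i j m u : ℕ} (h : P.word i j m = u) : P.slot i j u = m :=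
  (P.word_bijective i j).1 (by rw [word_slot, h])

lemma slot_congr {i j i' j' : ℕ} (h : P.word i j = P.word i' j') : P.slot i j = P.slot i' j' := by
  unfold slot
  rw [h]

lemma slot_lt_slot_iff_succ {u v i c : ℕ} (h : ¬ P.CrossAt u v (i, c)) :
    P.slot i c u < P.slot i c v ↔ P.slot i (c + 1) u < P.slot i (c + 1) v := by
  by_cases hc : (i, c) ∈ P.cross
  · have hswap : ∀ x, P.slot i c x = swap (i + c) (i + c + 1) (P.slot i (c + 1) x) := fun x =>
      slot_eq_of_word_eq (by rw [word_of_mem_cross hc, Function.comp_apply, swap_apply_self,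
        word_slot])
    have hnorth : ∀ x, P.slot i (c + 1) x = i + c → x = P.north (i, c) := fun x hx => by
      rw [north_eq_word, ← hx, word_slot]
    have heast : ∀ x, P.slot i (c + 1) x = i + c + 1 → x = P.east (i, c) := fun x hx => by
      rw [east_eq_word, ← hx, word_slot]
    have hpair : ¬ ((P.slot i (c + 1) u = i + c ∧ P.slot i (c + 1) v = i + c + 1) ∨
        (P.slot i (c + 1) u = i + c + 1 ∧ P.slot i (c + 1) v = i + c)) := by
      rintro (⟨hu, hv⟩ | ⟨hu, hv⟩)
      · exact h ⟨hc, by rw [hnorth u hu, heast v hv]⟩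
      · exact h ⟨hc, by rw [heast u hu, hnorth v hv, Set.pair_comm]⟩
    rw [hswap u, hswap v]
    simp only [swap_apply_def]
    split_ifs <;> omega
  · rw [slot_congr (word_of_notMem_cross hc)]

lemma slot_lt_slot_iff_of_row {u v i j j' : ℕ} (hjj' : j ≤ j')
    (h : ∀ c, j ≤ c → c < j' → ¬ P.CrossAt u v (i, c)) :
    P.slot i j u < P.slot i j v ↔ P.slot i j' u < P.slot i j' v := by
  induction j', hjj' using Nat.le_induction with
  | base => rfl
  | succ j' hj ih =>
    rw [ih fun c hc1 hc2 => h c hc1 (by omega)]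
    exact slot_lt_slot_iff_succ (h j' hj (by omega))

lemma slot_lt_slot_iff_of_notMem_processed {u v i j : ℕ}
    (h : ∀ q, P.CrossAt u v q → q ∉ processed i j) :
    P.slot i j u < P.slot i j v ↔ u < v := by
  obtain ⟨N, hN⟩ := P.exists_notMem_cross
  induction i generalizing j with
  | zero =>
    rw [slot_lt_slot_iff_of_row (le_max_left j N)
      fun c hc _ hca => h _ hca (Or.inr ⟨rfl, hc⟩)]
    have hid : ∀ x, P.slot 0 (max j N) x = x := fun x => slot_eq_of_word_eq (by
      rw [word_eq_rowWord fun c hc => hN 0 c (le_of_max_le_right hc), rowWord_zero, id])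
    rw [hid, hid]
  | succ i ih =>
    rw [slot_lt_slot_iff_of_row (le_max_left j N)
      fun c hc _ hca => h _ hca (Or.inr ⟨rfl, hc⟩),
      slot_congr ((word_eq_rowWord fun c hc => hN _ c (le_of_max_le_right hc)).trans
        (word_zero i).symm)]
    refine ih fun q hq hproc => h q hq (Or.inl ?_)
    rcases hproc with hlt | ⟨heq, _⟩ <;> omega

lemma slot_lt_slot_iff_of_mem_processed {w : Perm ℕ} (hfor : P.IsFor w) {u v i j : ℕ}
    (h : ∀ q, P.CrossAt u v q → q ∈ processed i j) :
    P.slot i j u < P.slot i j v ↔ w⁻¹ u < w⁻¹ v := by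
  obtain ⟨N, hN⟩ := P.exists_notMem_cross
  obtain ⟨k, hk⟩ : ∃ k, max (w⁻¹ u) (w⁻¹ v) < i + k := ⟨max (w⁻¹ u) (w⁻¹ v) + 1, by omega⟩
  induction k generalizing i j with
  | zero =>
    have hslot : ∀ x, w⁻¹ x < i → P.slot i j x = w⁻¹ x := fun x hx =>
      slot_eq_of_word_eq (by rw [word_apply_of_isFor hfor (Or.inl hx)]; simp)
    rw [hslot u (by omega), hslot v (by omega)]
  | succ k ih =>
    rw [← slot_lt_slot_iff_of_row (Nat.zero_le j) fun c _ hc hca => by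
        have : i < i ∨ (i = i ∧ j ≤ c) := h _ hca
        omega,
      slot_congr ((word_zero i).trans (word_eq_rowWord (j := N) fun c hc => hN _ c hc).symm)]
    exact ih (fun q hq => Or.inl (by rcases h q hq with h1 | ⟨h1, _⟩ <;> omega)) (by omega)

variable {w : Perm ℕ}

lemma north_lt_east (hred : P.Reduced) {i j : ℕ} (hc : (i, j) ∈ P.cross) :
    P.north (i, j) < P.east (i, j) := by
  have huniq : ∀ q, P.CrossAt (P.north (i, j)) (P.east (i, j)) q → q = (i, j) :=
    fun q hq => hred _ _ _ _ hq ⟨hc, rfl⟩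
  rw [← slot_lt_slot_iff_of_notMem_processed (i := i) (j := j + 1) fun q hq => by
      rw [huniq q hq]
      simp [processed],
    slot_eq_of_word_eq (north_eq_word i j).symm, slot_eq_of_word_eq (east_eq_word i j).symm]
  omega

lemma inv_east_lt_inv_north (hred : P.Reduced) (hfor : P.IsFor w) {i j : ℕ}
    (hc : (i, j) ∈ P.cross) : w⁻¹ (P.east (i, j)) < w⁻¹ (P.north (i, j)) := by
  have huniq : ∀ q, P.CrossAt (P.east (i, j)) (P.north (i, j)) q → q = (i, j) :=
    fun q hq => hred _ _ _ _ hq ⟨hc, Set.pair_comm _ _⟩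
  have heast : P.word i j (i + j) = P.east (i, j) := by rw [← west_eq_word, P.west_cross _ hc]
  have hnorth : P.word i j (i + j + 1) = P.north (i, j) := by
    rw [← south_eq_word le_rfl, P.south_cross _ hc]
  rw [← slot_lt_slot_iff_of_mem_processed hfor (i := i) (j := j) fun q hq => by
      rw [huniq q hq]
      simp [processed],
    slot_eq_of_word_eq heast, slot_eq_of_word_eq hnorth]
  omega

lemma le_inv_east (hfor : P.IsFor w) (i j : ℕ) : i ≤ w⁻¹ (P.east (i, j)) := by
  rw [east_eq_word]
  exact le_inv_apply_of_eqOn (P.word_bijective _ _).1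
    (fun _ ha => word_apply_of_isFor hfor (Or.inl ha)) (by omega)

lemma south_injective (i : ℕ) : Function.Injective fun j => P.south (i, j) := fun a b h => by
  have := (P.word_bijective i 0).1 <|
    (south_eq_word (Nat.zero_le a)).symm.trans (h.trans (south_eq_word (Nat.zero_le b)))
  omega

lemma exists_south_eq (hfor : P.IsFor w) {i a : ℕ} (ha : i < a) : ∃ j, P.south (i, j) = w a := by
  have hm := P.word_slot i 0 (w a)
  have him : i < P.slot i 0 (w a) := by
    by_contra! hle
    have := w.injective ((word_apply_of_isFor hfor (by omega)).symm.trans hm)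
    omega
  exact ⟨P.slot i 0 (w a) - i - 1, by
    rw [south_eq_word (Nat.zero_le _), show i + (P.slot i 0 (w a) - i - 1) + 1 = P.slot i 0 (w a)
      by omega, hm]⟩

end PipeDream

section Dominated

variable {π w : Perm ℕ} {l : ℕ → ℕ} {P : PipeDream}

lemma dominated_row_eq (hl : Antitone l) (hsupp : (Function.support l).Finite) (i : ℕ) :
    {j | (i, j) ∈ dominated π l w P} = (fun j => w⁻¹ (P.south (i, j))) ⁻¹' {a | π a < l i} := by
  ext j
  exact lt_conjPart_iff hl hsupp i _

lemma ncard_setOf_apply_lt (π : Perm ℕ) (n : ℕ) : {a | π a < n}.ncard = n :=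
  (Set.ncard_preimage_of_injective_subset_range π.injective (s := Set.Iio n)
    (by simp [π.surjective.range_eq])).trans (Set.ncard_Iio_nat n)

lemma ncard_dominated_row (hl : Antitone l) (hsupp : (Function.support l).Finite)
    (hD : Rothe π = yd l) (hfor : P.IsFor w) (i : ℕ) :
    {j | (i, j) ∈ dominated π l w P}.ncard = l i := by
  have hinj : Function.Injective fun j => w⁻¹ (P.south (i, j)) :=
    w⁻¹.injective.comp (PipeDream.south_injective i)
  rw [dominated_row_eq hl hsupp, Set.ncard_preimage_of_injective_subset_range hinj,
    ncard_setOf_apply_lt]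
  intro a ha
  have hia : i < a := by
    by_contra! hai
    have := le_apply_of_rothe_eq_yd hD a
    have := hl hai
    have : π a < l i := ha
    omega
  obtain ⟨j, hj⟩ := PipeDream.exists_south_eq hfor hia
  exact ⟨j, by simp [hj]⟩

lemma dominated_finite (hl : Antitone l) (hsupp : (Function.support l).Finite) :
    (dominated π l w P).Finite := by
  have hrow : ∀ i, {j | (i, j) ∈ dominated π l w P}.Finite := fun i => by
    rw [dominated_row_eq hl hsupp]
    exact (Set.finite_Iio (l i)).preimage π.injective.injOn |>.preimage
      (w⁻¹.injective.comp (PipeDream.south_injective i)).injOn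
  refine (hsupp.biUnion fun i _ => (Set.finite_singleton i).prod (hrow i)).subset ?_
  rintro ⟨i, j⟩ hq
  have : π (w⁻¹ (P.south (i, j))) < l i := (lt_conjPart_iff hl hsupp i _).mp hq
  exact Set.mem_biUnion (Function.mem_support.mpr (Nat.ne_zero_of_lt this)) ⟨rfl, hq⟩

lemma cross_subset_dominated (hl : Antitone l) (hsupp : (Function.support l).Finite)
    (hD : Rothe π = yd l) (hw : leL w π) (hred : P.Reduced) (hfor : P.IsFor w) :
    ↑P.cross ⊆ dominated π l w P := by
  rintro ⟨i, j⟩ hc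
  set s := P.north (i, j)
  set t := P.east (i, j)
  have hexit : w⁻¹ t < w⁻¹ s := PipeDream.inv_east_lt_inv_north hred hfor hc
  have hinv : (w⁻¹ t, w⁻¹ s) ∈ invSet w :=
    ⟨hexit, by simpa using PipeDream.north_lt_east hred hc⟩
  have hπ : π (w⁻¹ s) < l (w⁻¹ t) :=
    (apply_lt_apply_iff_of_rothe_eq_yd hD hexit).mp (invSet_subset_of_leL hw hinv).2
  have hrow : l (w⁻¹ t) ≤ l i := hl (PipeDream.le_inv_east hfor i j)
  show i < conjPart l (π (w⁻¹ (P.south (i, j))))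
  rw [P.south_cross _ hc, lt_conjPart_iff hl hsupp]
  exact hπ.trans_le hrow

end Dominated

lemma algebraMap_X_ne_zero (v : ℕ ⊕ ℕ) : algebraMap PolyXY RatXY (X v) ≠ 0 :=
  (map_ne_zero_iff _ (IsFractionRing.injective PolyXY RatXY)).mpr (X_ne_zero v)

theorem stmt11_general (π w : Equiv.Perm ℕ) (l : ℕ → ℕ) (hl : Antitone l)
    (hsupp : (Function.support l).Finite) (hD : Rothe π = yd l) (hw : leL w π) :
    padded l w = ∑ᶠ P ∈ PD w,
      (∏ p ∈ P.cross, Xv p.1) *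
        ∏ᶠ q ∈ ({q : ℕ × ℕ | q ∉ P.cross} ∩ dominated π l w P), Yv q.1 := by
  have hXY : ∀ P : PipeDream, aeval (fun i => Xv i / Yv i) (∏ p ∈ P.cross, X (R := ℤ) p.1) =
      ∏ p ∈ P.cross, Xv p.1 / Yv p.1 := fun P => by
    simp [map_prod]
  rw [padded, Schub, map_finsum_mem_of_map_ne_zero, mul_finsum_mem]
  · refine finsum_mem_congr rfl fun P ⟨hred, hfor⟩ => ?_
    rw [hXY]
    exact finprod_pow_mul_prod_div (fun i => algebraMap_X_ne_zero _)
      (cross_subset_dominated hl hsupp hD hw hred hfor) (dominated_finite hl hsupp)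
      (ncard_dominated_row hl hsupp hD hfor)
  · intro P _ _
    rw [hXY]
    exact Finset.prod_ne_zero_iff.mpr fun p _ =>
      div_ne_zero (algebraMap_X_ne_zero _) (algebraMap_X_ne_zero _)

/-- the pipe dream formula for the π-padded Schubert polynomial:
𝔖_w^π(x;y) = Σ_{P ∈ PD(w)} x^{P(cross)} y^{P(bump) ∩ P(π)}. -/
theorem stmt11 (π w : Equiv.Perm ℕ) (l : ℕ → ℕ) (hπ : FinSupp π)
    (hdom : Avoids132 π) (hl : Antitone l) (hsupp : (Function.support l).Finite)
    (hD : Rothe π = yd l) (hw : leL w π) :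
    padded l w = ∑ᶠ P ∈ PD w,
      (∏ p ∈ P.cross, Xv p.1) *
        ∏ᶠ q ∈ ({q : ℕ × ℕ | q ∉ P.cross} ∩ dominated π l w P), Yv q.1 :=
  stmt11_general π w l hl hsupp hD hw
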